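/- arXiv:2003.03063 — 5 statements merged into one kernel-verified Lean document; each statement's English description precedes it below -/
import Mathlib

section
/- If H(s)φ(s) = 0 with φ(s) a differentiable unit eigenvector satisfying ⟨φ'(s),φ(s)⟩ = 0, and R(s) is the Hermitian pseudo-inverse of H(s) on the orthogonal complement of φ(s), then φ'(s) = −R(s)H'(s)φ(s), and consequently ‖φ'(s)‖ ≤ ‖H'(s)‖/λ(s). -/
open scoped InnerProductSpace

/-- If `H(s) φ(s) = 0` with `φ(s)` a differentiable unit eigenvector satisfying
`⟪φ'(s), φ(s)⟫ = 0`, and `R(s)` is the Hermitian pseudo-inverse of `H(s)` on the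
orthogonal complement of `φ(s)`, then `φ'(s) = -R(s) H'(s) φ(s)`, and consequently
`‖φ'(s)‖ ≤ ‖H'(s)‖ / λ(s)`. -/
theorem stmt_2 {n : ℕ}
    (H H' R Q : ℝ → EuclideanSpace ℂ (Fin n) →L[ℂ] EuclideanSpace ℂ (Fin n))
    (φ φ' : ℝ → EuclideanSpace ℂ (Fin n))
    (lam : ℝ → ℝ)
    (hlam : ∀ s, 0 < lam s)
    (hherm : ∀ s, IsSelfAdjoint (H s))
    (hRherm : ∀ s, IsSelfAdjoint (R s))
    (hHd : ∀ s, HasDerivAt H (H' s) s)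
    (hφd : ∀ s, HasDerivAt φ (φ' s) s)
    (hunit : ∀ s, ‖φ s‖ = 1)
    (heig : ∀ s, H s (φ s) = 0)
    (horth : ∀ s, ⟪φ' s, φ s⟫_ℂ = 0)
    -- `Q(s) = 1 - |φ(s)⟩⟨φ(s)|`
    (hQ : ∀ s, Q s = 1 - (innerSL ℂ (φ s)).smulRight (φ s))
    -- `R(s)` is the pseudo-inverse of `H(s)` on the support of `Q(s)`
    (hHR : ∀ s, H s ∘L R s = Q s)
    (hQR : ∀ s, Q s ∘L R s = R s)
    -- all nonzero eigenvalues of `H(s)` are at least `λ(s)` in absolute value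
    (hRnorm : ∀ s, ‖R s‖ ≤ 1 / lam s) :
    ∀ s, φ' s = -(R s (H' s (φ s))) ∧ ‖φ' s‖ ≤ ‖H' s‖ / lam s := by
  intro s
  -- derivative of H s (φ s) = 0
  have hHdR : HasDerivAt (fun s => (H s).restrictScalars ℝ) ((H' s).restrictScalars ℝ) s :=
    (ContinuousLinearMap.restrictScalarsL ℂ (EuclideanSpace ℂ (Fin n))
      (EuclideanSpace ℂ (Fin n)) ℝ ℝ).hasFDerivAt.comp_hasDerivAt s (hHd s)
  have hd : HasDerivAt (fun s => H s (φ s)) (H' s (φ s) + H s (φ' s)) s :=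
    hHdR.clm_apply (hφd s)
  have hzero : HasDerivAt (fun s => H s (φ s)) 0 s := by
    have : (fun s => H s (φ s)) = fun _ => (0 : EuclideanSpace ℂ (Fin n)) := by
      funext t; exact heig t
    rw [this]; exact hasDerivAt_const _ _
  have hsum : H' s (φ s) + H s (φ' s) = 0 := hd.unique hzero
  have hHφ' : H s (φ' s) = -(H' s (φ s)) := by linear_combination (norm := module) hsum
  -- Q self-adjoint
  have hQsa : IsSelfAdjoint (Q s) := by
    rw [ContinuousLinearMap.isSelfAdjoint_iff_isSymmetric]
    intro x y
    have hQapp : ∀ z, (Q s) z = z - ⟪φ s, z⟫_ℂ • φ s := by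
      intro z; rw [hQ s]; rfl
    simp only [ContinuousLinearMap.coe_coe, hQapp, inner_sub_left, inner_sub_right,
      inner_smul_left, inner_smul_right, inner_conj_symm]
    ring
  -- R H = Q
  have hRH : R s ∘L H s = Q s := by
    have := congrArg ContinuousLinearMap.adjoint (hHR s)
    rwa [ContinuousLinearMap.adjoint_comp, (hherm s).adjoint_eq, (hRherm s).adjoint_eq,
      hQsa.adjoint_eq] at this
  have hQφ' : Q s (φ' s) = φ' s := by
    rw [hQ s]
    simp only [ContinuousLinearMap.coe_sub', Pi.sub_apply, ContinuousLinearMap.one_apply,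
      ContinuousLinearMap.smulRight_apply, innerSL_apply_apply]
    rw [← inner_conj_symm, horth s]
    simp
  have key : φ' s = -(R s (H' s (φ s))) := by
    have : R s (H s (φ' s)) = φ' s := by
      have := congrArg (fun T => T (φ' s)) hRH
      simpa [hQφ'] using this
    rw [← this, hHφ', map_neg]
  refine ⟨key, ?_⟩
  rw [key, norm_neg]
  calc ‖R s (H' s (φ s))‖ ≤ ‖R s‖ * ‖H' s (φ s)‖ := (R s).le_opNorm _
    _ ≤ (1 / lam s) * (‖H' s‖ * ‖φ s‖) :=
      mul_le_mul (hRnorm s) ((H' s).le_opNorm _) (norm_nonneg _)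
        (le_trans (norm_nonneg _) (hRnorm s))
    _ = ‖H' s‖ / lam s := by rw [hunit s]; ring
end

section
/- Under the hypotheses above (eigenvalue 0, gap λ(s)), ‖R(s)φ'(s)‖ ≤ ‖H'(s)‖/λ(s)². -/
/-!
Differentiating `H(s) φ(s) = 0` gives `H(s) φ'(s) = -H'(s) φ(s)`. Since `H` and `R` are
self-adjoint and `H R = Q` is self-adjoint, `H` and `R` commute, so `R H = Q` fixes the vector
`φ'(s) ⊥ φ(s)`. Hence `φ'(s) = -R(s) H'(s) φ(s)`, and
`‖R(s) φ'(s)‖ ≤ ‖R(s)‖² ‖H'(s)‖ ≤ ‖H'(s)‖ / λ(s)²`.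
-/

open scoped InnerProductSpace
open ContinuousLinearMap InnerProductSpace Topology

section Deriv

variable {𝕜 𝕜' : Type*} [NontriviallyNormedField 𝕜] [NontriviallyNormedField 𝕜']
  [NormedAlgebra 𝕜 𝕜'] {F G : Type*}
  [NormedAddCommGroup F] [NormedSpace 𝕜' F] [NormedSpace 𝕜 F] [IsScalarTower 𝕜 𝕜' F]
  [NormedAddCommGroup G] [NormedSpace 𝕜' G] [NormedSpace 𝕜 G] [IsScalarTower 𝕜 𝕜' G]
  {c : 𝕜 → F →L[𝕜'] G} {c' : F →L[𝕜'] G} {u : 𝕜 → F} {u' : F} {x : 𝕜}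

theorem HasDerivAt.clm_apply_of_isScalarTower (hc : HasDerivAt c c' x) (hu : HasDerivAt u u' x) :
    HasDerivAt (fun y => c y (u y)) (c' (u x) + c x u') x :=
  ((restrictScalarsL 𝕜' F G 𝕜 𝕜).hasFDerivAt.comp_hasDerivAt x hc).clm_apply hu

theorem HasDerivAt.clm_apply_add_eq_zero (hc : HasDerivAt c c' x) (hu : HasDerivAt u u' x)
    (h : ∀ᶠ y in 𝓝 x, c y (u y) = 0) :
    c' (u x) + c x u' = 0 :=
  (hc.clm_apply_of_isScalarTower hu).unique ((hasDerivAt_const x 0).congr_of_eventuallyEq h)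

end Deriv

section PseudoInverse

variable {𝕜 E : Type*} [RCLike 𝕜] [NormedAddCommGroup E] [InnerProductSpace 𝕜 E]

theorem one_sub_rankOne_self_apply_of_inner_eq_zero {v w : E} (hw : ⟪v, w⟫_𝕜 = 0) :
    (1 - rankOne 𝕜 v v) w = w := by
  simp [hw]

variable [CompleteSpace E]

theorem isSelfAdjoint_one_sub_rankOne_self (v : E) : IsSelfAdjoint (1 - rankOne 𝕜 v v) :=
  (IsSelfAdjoint.one _).sub (adjoint_rankOne v v)

theorem apply_apply_eq_self_of_comp_eq_one_sub_rankOne {H R : E →L[𝕜] E} {v w : E}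
    (hH : IsSelfAdjoint H) (hR : IsSelfAdjoint R) (hHR : H ∘L R = 1 - rankOne 𝕜 v v)
    (hw : ⟪v, w⟫_𝕜 = 0) :
    R (H w) = w := by
  have hcomm : Commute H R :=
    IsSelfAdjoint.commute_of_mul_eq_isSelfAdjoint H R _ hH hR
      (isSelfAdjoint_one_sub_rankOne_self v) hHR
  rw [← comp_apply, ← mul_def, ← hcomm.eq, mul_def, hHR,
    one_sub_rankOne_self_apply_of_inner_eq_zero hw]

end PseudoInverse

theorem stmt_3_general {n : ℕ}
    (H H' R Q : ℝ → EuclideanSpace ℂ (Fin n) →L[ℂ] EuclideanSpace ℂ (Fin n))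
    (φ φ' : ℝ → EuclideanSpace ℂ (Fin n))
    (lam : ℝ → ℝ)
    (hherm : ∀ s, IsSelfAdjoint (H s))
    (hRherm : ∀ s, IsSelfAdjoint (R s))
    (hHd : ∀ s, HasDerivAt H (H' s) s)
    (hφd : ∀ s, HasDerivAt φ (φ' s) s)
    (hunit : ∀ s, ‖φ s‖ = 1)
    (heig : ∀ s, H s (φ s) = 0)
    (horth : ∀ s, ⟪φ' s, φ s⟫_ℂ = 0)
    -- `Q(s) = 1 - |φ(s)⟩⟨φ(s)|`
    (hQ : ∀ s, Q s = 1 - (innerSL ℂ (φ s)).smulRight (φ s))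
    -- `R(s)` is the pseudo-inverse of `H(s)` on the support of `Q(s)`
    (hHR : ∀ s, H s ∘L R s = Q s)
    -- all nonzero eigenvalues of `H(s)` are at least `λ(s)` in absolute value
    (hRnorm : ∀ s, ‖R s‖ ≤ 1 / lam s) :
    ∀ s, ‖R s (φ' s)‖ ≤ ‖H' s‖ / (lam s) ^ 2 := by
  intro s
  have hHφ' : H s (φ' s) = -H' s (φ s) :=
    eq_neg_of_add_eq_zero_right <|
      (hHd s).clm_apply_add_eq_zero (hφd s) (Filter.Eventually.of_forall heig)
  have hφ' : φ' s = -R s (H' s (φ s)) := by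
    rw [← map_neg, ← hHφ', apply_apply_eq_self_of_comp_eq_one_sub_rankOne (hherm s) (hRherm s)
      ((hHR s).trans (hQ s)) (inner_eq_zero_symm.mp (horth s))]
  calc ‖R s (φ' s)‖ ≤ ‖R s‖ * (‖R s‖ * (‖H' s‖ * ‖φ s‖)) := by
        rw [hφ', map_neg, norm_neg]
        exact (R s).le_opNorm_of_le <| (R s).le_opNorm_of_le <| (H' s).le_opNorm _
    _ = ‖R s‖ ^ 2 * ‖H' s‖ := by rw [hunit s]; ring
    _ ≤ (1 / lam s) ^ 2 * ‖H' s‖ := by gcongr; exact hRnorm s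
    _ = ‖H' s‖ / (lam s) ^ 2 := by ring

/-- Under the eigenvalue-zero hypotheses with spectral gap `λ(s)`,
`‖R(s) φ'(s)‖ ≤ ‖H'(s)‖ / λ(s)²`. -/
theorem stmt_3 {n : ℕ}
    (H H' R Q : ℝ → EuclideanSpace ℂ (Fin n) →L[ℂ] EuclideanSpace ℂ (Fin n))
    (φ φ' : ℝ → EuclideanSpace ℂ (Fin n))
    (lam : ℝ → ℝ)
    (hlam : ∀ s, 0 < lam s)
    (hherm : ∀ s, IsSelfAdjoint (H s))
    (hRherm : ∀ s, IsSelfAdjoint (R s))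
    (hHd : ∀ s, HasDerivAt H (H' s) s)
    (hφd : ∀ s, HasDerivAt φ (φ' s) s)
    (hunit : ∀ s, ‖φ s‖ = 1)
    (heig : ∀ s, H s (φ s) = 0)
    (horth : ∀ s, ⟪φ' s, φ s⟫_ℂ = 0)
    -- `Q(s) = 1 - |φ(s)⟩⟨φ(s)|`
    (hQ : ∀ s, Q s = 1 - (innerSL ℂ (φ s)).smulRight (φ s))
    -- `R(s)` is the pseudo-inverse of `H(s)` on the support of `Q(s)`
    (hHR : ∀ s, H s ∘L R s = Q s)
    (hQR : ∀ s, Q s ∘L R s = R s)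
    -- all nonzero eigenvalues of `H(s)` are at least `λ(s)` in absolute value
    (hRnorm : ∀ s, ‖R s‖ ≤ 1 / lam s) :
    ∀ s, ‖R s (φ' s)‖ ≤ ‖H' s‖ / (lam s) ^ 2 :=
  stmt_3_general H H' R Q φ φ' lam hherm hRherm hHd hφd hunit heig horth hQ hHR hRnorm
end

section
/- Under the hypotheses above, the derivative of the pseudo-inverse satisfies R'(s) = −R(s)P'(s) − P'(s)R(s) − R(s)H'(s)R(s), where P(s) = |φ(s)⟩⟨φ(s)|. -/
open scoped InnerProductSpace

/-!
Write `Q = 1 - P`. Since `H` and `R` are self-adjoint, `R H = (H R)⋆ = Q⋆ = Q`.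
Differentiating `H R = 1 - P` and `P R = 0` gives `H' R + H R' = -P'` and `P' R + P R' = 0`.
Splitting `R' = P R' + Q R'`, the first equation multiplied on the left by `R` yields
`Q R' = R H R' = -R P' - R H' R`, and the second one yields `P R' = -P' R`.
-/

theorem IsSelfAdjoint.mul_eq_one_sub_of_mul_eq_one_sub {A : Type*} [Ring A] [StarRing A]
    {H R P : A} (hH : IsSelfAdjoint H) (hR : IsSelfAdjoint R) (hP : IsSelfAdjoint P)
    (hHR : H * R = 1 - P) : R * H = 1 - P := by
  have hQ : IsSelfAdjoint (1 - P) := (IsSelfAdjoint.one A).sub hP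
  simpa only [star_mul, hH.star_eq, hR.star_eq, hQ.star_eq] using congrArg star hHR

theorem eq_of_pseudoInverse_relations {A : Type*} [Ring A] {H H' R R' P P' : A}
    (hRH : R * H = 1 - P) (hHR_deriv : H' * R + H * R' = -P') (hPR_deriv : P' * R + P * R' = 0) :
    R' = -(R * P') - P' * R - R * (H' * R) := by
  have hP_part : P * R' = -(P' * R) := eq_neg_of_add_eq_zero_right hPR_deriv
  have hQ_part : (1 - P) * R' = -(R * P') - R * (H' * R) := by
    have h := congrArg (R * ·) hHR_deriv
    simp only [mul_add, mul_neg, ← mul_assoc R H R', hRH] at h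
    exact eq_sub_of_add_eq' h
  calc R' = P * R' + (1 - P) * R' := by noncomm_ring
    _ = -(R * P') - P' * R - R * (H' * R) := by rw [hP_part, hQ_part]; abel

section Deriv

variable {𝕜 A : Type*} [NontriviallyNormedField 𝕜] [NormedRing A] [NormedAlgebra 𝕜 A]

theorem HasDerivAt.mul_eq_of_forall_mul_eq {f g h : 𝕜 → A} {f' g' h' : A} {s : 𝕜}
    (hf : HasDerivAt f f' s) (hg : HasDerivAt g g' s) (hh : HasDerivAt h h' s)
    (hfg : ∀ t, f t * g t = h t) :
    f' * g s + f s * g' = h' :=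
  (hf.mul hg).unique (by simpa only [show f * g = h from funext hfg] using hh)

theorem HasDerivAt.pseudoInverse_deriv_eq {H R P : 𝕜 → A} {H' R' P' : A} {s : 𝕜}
    (hH : HasDerivAt H H' s) (hR : HasDerivAt R R' s) (hP : HasDerivAt P P' s)
    (hHR : ∀ t, H t * R t = 1 - P t) (hPR : ∀ t, P t * R t = 0) (hRH : R s * H s = 1 - P s) :
    R' = -(R s * P') - P' * R s - R s * (H' * R s) := by
  refine eq_of_pseudoInverse_relations hRH ?_ ?_
  · exact hH.mul_eq_of_forall_mul_eq hR (hP.const_sub 1) hHR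
  · exact hP.mul_eq_of_forall_mul_eq hR (hasDerivAt_const s 0) hPR

end Deriv

theorem stmt_4_general {n : ℕ}
    (H H' R R' P P' Q : ℝ → EuclideanSpace ℂ (Fin n) →L[ℂ] EuclideanSpace ℂ (Fin n))
    (φ : ℝ → EuclideanSpace ℂ (Fin n))
    (hherm : ∀ s, IsSelfAdjoint (H s))
    (hRherm : ∀ s, IsSelfAdjoint (R s))
    (hHd : ∀ s, HasDerivAt H (H' s) s)
    (hRd : ∀ s, HasDerivAt R (R' s) s)
    (hPd : ∀ s, HasDerivAt P (P' s) s)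
    (hP : ∀ s, P s = (innerSL ℂ (φ s)).smulRight (φ s))
    (hQ : ∀ s, Q s = 1 - P s)
    (hHR : ∀ s, H s ∘L R s = Q s)
    (hPR : ∀ s, P s ∘L R s = 0) :
    ∀ s, R' s = -(R s ∘L P' s) - (P' s ∘L R s) - (R s ∘L H' s ∘L R s) := by
  intro s
  have hPsa : IsSelfAdjoint (P s) := by
    rw [hP s, ← InnerProductSpace.rankOne_def, ContinuousLinearMap.isSelfAdjoint_iff_isSymmetric]
    exact InnerProductSpace.isSymmetric_rankOne_self (φ s)
  have hHRP : ∀ t, H t * R t = 1 - P t := fun t => (hHR t).trans (hQ t)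
  have hRH : R s * H s = 1 - P s :=
    (hherm s).mul_eq_one_sub_of_mul_eq_one_sub (hRherm s) hPsa (hHRP s)
  exact (hHd s).pseudoInverse_deriv_eq (hRd s) (hPd s) hHRP hPR hRH

/-- The derivative of the pseudo-inverse satisfies
`R'(s) = -R(s)P'(s) - P'(s)R(s) - R(s)H'(s)R(s)`, where `P(s) = |φ(s)⟩⟨φ(s)|`. -/
theorem stmt_4 {n : ℕ}
    (H H' R R' P P' Q : ℝ → EuclideanSpace ℂ (Fin n) →L[ℂ] EuclideanSpace ℂ (Fin n))
    (φ : ℝ → EuclideanSpace ℂ (Fin n))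
    (hherm : ∀ s, IsSelfAdjoint (H s))
    (hRherm : ∀ s, IsSelfAdjoint (R s))
    (hHd : ∀ s, HasDerivAt H (H' s) s)
    (hRd : ∀ s, HasDerivAt R (R' s) s)
    (hPd : ∀ s, HasDerivAt P (P' s) s)
    (hunit : ∀ s, ‖φ s‖ = 1)
    (heig : ∀ s, H s (φ s) = 0)
    (hP : ∀ s, P s = (innerSL ℂ (φ s)).smulRight (φ s))
    (hQ : ∀ s, Q s = 1 - P s)
    (hHR : ∀ s, H s ∘L R s = Q s)
    (hQR : ∀ s, Q s ∘L R s = R s)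
    (hRQ : ∀ s, R s ∘L Q s = R s)
    (hPR : ∀ s, P s ∘L R s = 0) :
    ∀ s, R' s = -(R s ∘L P' s) - (P' s ∘L R s) - (R s ∘L H' s ∘L R s) :=
  stmt_4_general H H' R R' P P' Q φ hherm hRherm hHd hRd hPd hP hQ hHR hPR
end

section
/- If γ(s) is a non-degenerate eigenvalue of H(s) with spectral gap λ(s) ≥ λ > 0 and unit eigenvector φ(s) with ⟨φ'(s),φ(s)⟩ = 0, then |γ''(s)| ≤ ‖H''(s)‖ + 4‖H'(s)‖²/λ(s), where γ'(s) = ⟨φ(s),H'(s)φ(s)⟩. -/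
open scoped InnerProductSpace

/-- If `γ(s)` is a non-degenerate eigenvalue of `H(s)` with spectral gap
`λ(s) ≥ λ > 0` and unit eigenvector `φ(s)` with `⟪φ'(s), φ(s)⟫ = 0`, then
`|γ''(s)| ≤ ‖H''(s)‖ + 4 ‖H'(s)‖² / λ(s)`, where `γ'(s) = ⟪φ(s), H'(s) φ(s)⟫`. -/
theorem stmt_7 {n : ℕ}
    (H H' H'' : ℝ → EuclideanSpace ℂ (Fin n) →L[ℂ] EuclideanSpace ℂ (Fin n))
    (γ γ' γ'' : ℝ → ℝ)
    (φ φ' φ'' : ℝ → EuclideanSpace ℂ (Fin n))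
    (lam : ℝ → ℝ) (lam0 : ℝ)
    (hlam0 : 0 < lam0)
    (hlam : ∀ s, lam0 ≤ lam s)
    (hherm : ∀ s, IsSelfAdjoint (H s))
    (hHd : ∀ s, HasDerivAt H (H' s) s)
    (hHd2 : ∀ s, HasDerivAt H' (H'' s) s)
    (hγd : ∀ s, HasDerivAt γ (γ' s) s)
    (hγd2 : ∀ s, HasDerivAt γ' (γ'' s) s)
    (hφd : ∀ s, HasDerivAt φ (φ' s) s)
    (hφd2 : ∀ s, HasDerivAt φ' (φ'' s) s)
    (hunit : ∀ s, ‖φ s‖ = 1)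
    (heig : ∀ s, H s (φ s) = γ s • φ s)
    (horth : ∀ s, ⟪φ' s, φ s⟫_ℂ = 0)
    -- every other eigenvalue of `H(s)` is at least `λ(s)` away from `γ(s)`
    (hgap : ∀ s, ∀ μ ∈ spectrum ℂ (H s), μ ≠ (γ s : ℂ) → lam s ≤ ‖μ - (γ s : ℂ)‖)
    -- Hellmann–Feynman relation
    (hγ' : ∀ s, (γ' s : ℂ) = ⟪φ s, H' s (φ s)⟫_ℂ)
    (hφ'norm : ∀ s, ‖φ' s‖ ≤ 2 * ‖H' s‖ / lam s) :
    ∀ s, |γ'' s| ≤ ‖H'' s‖ + 4 * ‖H' s‖ ^ 2 / lam s := by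

  intro s
  have hlamp : 0 < lam s := lt_of_lt_of_le hlam0 (hlam s)
  -- derivative of s ↦ H' s (φ s)
  let L := ContinuousLinearMap.restrictScalarsL ℂ (EuclideanSpace ℂ (Fin n))
    (EuclideanSpace ℂ (Fin n)) ℝ ℝ
  have hA : HasDerivAt (fun t => (H' t) (φ t)) ((H'' s) (φ s) + (H' s) (φ' s)) s := by
    have hL : HasDerivAt (fun t => L (H' t)) (L (H'' s)) s :=
      L.hasFDerivAt.comp_hasDerivAt s (hHd2 s)
    exact hL.clm_apply (hφd s)
  have hf : HasDerivAt (fun t => (⟪φ t, (H' t) (φ t)⟫_ℂ : ℂ))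
      (⟪φ s, (H'' s) (φ s) + (H' s) (φ' s)⟫_ℂ + ⟪φ' s, (H' s) (φ s)⟫_ℂ) s :=
    (hφd s).inner ℂ hA
  have hg : HasDerivAt (fun t => ((γ' t : ℂ))) ((γ'' s : ℂ)) s :=
    (hγd2 s).ofReal_comp
  have hg' : HasDerivAt (fun t => (⟪φ t, (H' t) (φ t)⟫_ℂ : ℂ)) ((γ'' s : ℂ)) s := by
    have : (fun t => ((γ' t : ℂ))) = fun t => (⟪φ t, (H' t) (φ t)⟫_ℂ : ℂ) :=
      funext fun t => hγ' t
    rwa [this] at hg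
  have heq : (γ'' s : ℂ) = ⟪φ s, (H'' s) (φ s) + (H' s) (φ' s)⟫_ℂ + ⟪φ' s, (H' s) (φ s)⟫_ℂ :=
    hg'.unique hf
  have habs : |γ'' s| = ‖(γ'' s : ℂ)‖ := by
    rw [Complex.norm_real, Real.norm_eq_abs]
  rw [habs, heq]
  have h1 : ‖⟪φ s, (H'' s) (φ s)⟫_ℂ‖ ≤ ‖H'' s‖ := by
    calc ‖⟪φ s, (H'' s) (φ s)⟫_ℂ‖ ≤ ‖φ s‖ * ‖(H'' s) (φ s)‖ := norm_inner_le_norm _ _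
    _ ≤ ‖φ s‖ * (‖H'' s‖ * ‖φ s‖) := by
        gcongr; exact (H'' s).le_opNorm _
    _ = ‖H'' s‖ := by rw [hunit s]; ring
  have h2 : ‖⟪φ s, (H' s) (φ' s)⟫_ℂ‖ ≤ ‖H' s‖ * ‖φ' s‖ := by
    calc ‖⟪φ s, (H' s) (φ' s)⟫_ℂ‖ ≤ ‖φ s‖ * ‖(H' s) (φ' s)‖ := norm_inner_le_norm _ _
    _ ≤ ‖φ s‖ * (‖H' s‖ * ‖φ' s‖) := by gcongr; exact (H' s).le_opNorm _
    _ = ‖H' s‖ * ‖φ' s‖ := by rw [hunit s]; ring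
  have h3 : ‖⟪φ' s, (H' s) (φ s)⟫_ℂ‖ ≤ ‖H' s‖ * ‖φ' s‖ := by
    calc ‖⟪φ' s, (H' s) (φ s)⟫_ℂ‖ ≤ ‖φ' s‖ * ‖(H' s) (φ s)‖ := norm_inner_le_norm _ _
    _ ≤ ‖φ' s‖ * (‖H' s‖ * ‖φ s‖) := by gcongr; exact (H' s).le_opNorm _
    _ = ‖H' s‖ * ‖φ' s‖ := by rw [hunit s]; ring
  have hφ' : ‖φ' s‖ ≤ 2 * ‖H' s‖ / lam s := hφ'norm s
  have hH'nn : (0:ℝ) ≤ ‖H' s‖ := norm_nonneg _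
  calc ‖⟪φ s, (H'' s) (φ s) + (H' s) (φ' s)⟫_ℂ + ⟪φ' s, (H' s) (φ s)⟫_ℂ‖
      ≤ ‖⟪φ s, (H'' s) (φ s) + (H' s) (φ' s)⟫_ℂ‖ + ‖⟪φ' s, (H' s) (φ s)⟫_ℂ‖ := norm_add_le _ _
    _ ≤ (‖⟪φ s, (H'' s) (φ s)⟫_ℂ‖ + ‖⟪φ s, (H' s) (φ' s)⟫_ℂ‖) + ‖⟪φ' s, (H' s) (φ s)⟫_ℂ‖ := by
        gcongr
        rw [inner_add_right]
        exact norm_add_le _ _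
    _ ≤ (‖H'' s‖ + ‖H' s‖ * ‖φ' s‖) + ‖H' s‖ * ‖φ' s‖ := by gcongr
    _ ≤ ‖H'' s‖ + 4 * ‖H' s‖ ^ 2 / lam s := by
        have hm : ‖H' s‖ * ‖φ' s‖ ≤ ‖H' s‖ * (2 * ‖H' s‖ / lam s) :=
          mul_le_mul_of_nonneg_left hφ' hH'nn
        have h4 : ‖H' s‖ * (2 * ‖H' s‖ / lam s) = 2 * ‖H' s‖ ^ 2 / lam s := by
          ring
        have h5 : 2 * ‖H' s‖ ^ 2 / lam s + 2 * ‖H' s‖ ^ 2 / lam s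
            = 4 * ‖H' s‖ ^ 2 / lam s := by ring
        linarith
end

section
/- The operator norm of (n·σ) − σ_z equals 2 sin(θ/2), where n = (sinθcosα, sinθsinα, cosθ). -/
open Matrix

set_option maxHeartbeats 1000000 in
set_option synthInstance.maxHeartbeats 400000 in
/-- The operator norm of `(n·σ) - σz` equals `2 sin (θ/2)`, where
`n = (sin θ cos α, sin θ sin α, cos θ)`. -/
theorem stmt_14 (θ α : ℝ) (hθ : θ ∈ Set.Icc 0 Real.pi)
    (σx σy σz : Matrix (Fin 2) (Fin 2) ℂ)
    (hσx : σx = !![0, 1; 1, 0])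
    (hσy : σy = !![0, -Complex.I; Complex.I, 0])
    (hσz : σz = !![1, 0; 0, -1]) :
    ‖Matrix.toEuclideanCLM (𝕜 := ℂ)
        (((Real.sin θ * Real.cos α : ℝ) : ℂ) • σx
          + ((Real.sin θ * Real.sin α : ℝ) : ℂ) • σy
          + ((Real.cos θ : ℝ) : ℂ) • σz - σz)‖
      = 2 * Real.sin (θ / 2) := by
  subst hσx hσy hσz
  set A : Matrix (Fin 2) (Fin 2) ℂ :=
    ((Real.sin θ * Real.cos α : ℝ) : ℂ) • !![0, 1; 1, 0]
      + ((Real.sin θ * Real.sin α : ℝ) : ℂ) • !![0, -Complex.I; Complex.I, 0]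
      + ((Real.cos θ : ℝ) : ℂ) • !![1, 0; 0, -1] - !![1, 0; 0, -1] with hA
  have hstar : Aᴴ = A := by
    ext i j
    fin_cases i <;> fin_cases j <;>
      simp [hA, Matrix.conjTranspose_apply, Complex.ext_iff]
  have hsq : A * A = ((2 - 2 * Real.cos θ : ℝ) : ℂ) • 1 := by
    ext i j
    fin_cases i <;> fin_cases j <;>
      · simp [hA, Matrix.mul_apply, Fin.sum_univ_two, Matrix.one_apply, Complex.ext_iff, Complex.cos_ofReal_re, Complex.sin_ofReal_re]
        constructor <;> nlinarith [Real.sin_sq_add_cos_sq θ, Real.sin_sq_add_cos_sq α]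
  set T := Matrix.toEuclideanCLM (𝕜 := ℂ) A with hT
  have hTT : star T * T = ((2 - 2 * Real.cos θ : ℝ) : ℂ) • 1 := by
    rw [hT, ← map_star, ← _root_.map_mul]
    rw [show star A = A from hstar, hsq, _root_.map_smul, _root_.map_one]
  have hc : (0:ℝ) ≤ 2 - 2 * Real.cos θ := by nlinarith [Real.cos_le_one θ]
  have hnorm : ‖T‖ * ‖T‖ = 2 - 2 * Real.cos θ := by
    rw [← CStarRing.norm_star_mul_self, hTT]
    rw [norm_smul (((2 - 2 * Real.cos θ : ℝ) : ℂ)) (1 : EuclideanSpace ℂ (Fin 2) →L[ℂ] EuclideanSpace ℂ (Fin 2)), norm_one, mul_one, Complex.norm_real, Real.norm_eq_abs, abs_of_nonneg hc]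
  have hhalf : Real.sin (θ/2) ^ 2 = (1 - Real.cos θ)/2 := by
    have h1 : θ/2 + θ/2 = θ := by ring
    have h2 := Real.cos_add (θ/2) (θ/2)
    have h3 := Real.sin_sq_add_cos_sq (θ/2)
    rw [h1] at h2; nlinarith
  have hs : 0 ≤ Real.sin (θ/2) := by
    apply Real.sin_nonneg_of_nonneg_of_le_pi <;> [linarith [hθ.1]; linarith [hθ.2, Real.pi_pos]]
  have h2 : ‖T‖^2 = (2 * Real.sin (θ/2))^2 := by
    rw [pow_two, hnorm]; nlinarith [hhalf]
  calc ‖T‖ = Real.sqrt (‖T‖^2) := (Real.sqrt_sq (norm_nonneg T)).symm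
    _ = Real.sqrt ((2 * Real.sin (θ/2))^2) := by rw [h2]
    _ = 2 * Real.sin (θ/2) := Real.sqrt_sq (by positivity)
end
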